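/- Let C > 0, 0 < α < 1. There exists R > 0 depending only on C and α such that the holomorphic function F(z) = exp(−A/z^{1/α−1}) (principal branch, A = πC^{1/α}/(2(1/α−1))) is injective on Γ ∩ Δ_R, where Γ = {x+iy : x > C|y|^α} and Δ_R is the disk of radius R about 0; hence F maps Γ ∩ Δ_R conformally onto a planar domain. -/

import Mathlib

/-- The planar cusp `Γ = {x + iy : x > C|y|^α}`. -/
def planarCusp (C α : ℝ) : Set ℂ := {z : ℂ | C * |z.im| ^ α < z.re}

/-- `F(z) = exp(-A/z^(1/α-1))`, with `A = πC^(1/α)/(2(1/α-1))` and the principal branch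
of the power function. -/
noncomputable def Fmap (C α : ℝ) (z : ℂ) : ℂ :=
  Complex.exp (-((Real.pi * C ^ (1 / α) / (2 * (1 / α - 1)) : ℝ) : ℂ) *
    z ^ (-((1 / α - 1 : ℝ) : ℂ)))

private lemma abs_le_abs_tan {x : ℝ} (h : |x| < Real.pi / 2) : |x| ≤ |Real.tan x| := by
  rcases lt_trichotomy x 0 with hx | hx | hx
  · have h1 : 0 < -x := by linarith
    have h2 : -x < Real.pi / 2 := by
      have := (abs_lt.1 h).1; linarith
    have h3 := Real.lt_tan h1 h2
    rw [Real.tan_neg] at h3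
    calc |x| = -x := abs_of_neg hx
      _ ≤ -Real.tan x := h3.le
      _ ≤ |Real.tan x| := neg_le_abs _
  · simp [hx]
  · have h2 : x < Real.pi / 2 := lt_of_le_of_lt (le_abs_self x) h
    have h3 := Real.lt_tan hx h2
    calc |x| = x := abs_of_pos hx
      _ ≤ Real.tan x := h3.le
      _ ≤ |Real.tan x| := le_abs_self _

private lemma cusp_re_pos {C α : ℝ} (hC : 0 < C) {z : ℂ} (hz : z ∈ planarCusp C α) :
    0 < z.re :=
  lt_of_le_of_lt (by positivity) hz

private lemma cusp_arg_lt {C α : ℝ} (hC : 0 < C) (hα0 : 0 < α) {z : ℂ}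
    (hz : z ∈ planarCusp C α) :
    |Complex.arg z| < z.re ^ (1 / α - 1) / C ^ (1 / α) := by
  have hx : 0 < z.re := cusp_re_pos hC hz
  have hden : (0:ℝ) < C ^ (1 / α) := Real.rpow_pos_of_pos hC _
  have hnum : (0:ℝ) < z.re ^ (1 / α - 1) := Real.rpow_pos_of_pos hx _
  rcases eq_or_ne z.im 0 with him | him
  · rw [Complex.arg_eq_zero_iff.2 ⟨hx.le, him⟩]
    simpa using div_pos hnum hden
  · have h3 : |z.im| ^ α < z.re / C := (lt_div_iff₀' hC).2 hz
    have h1 : |z.im| < (z.re / C) ^ (1 / α) := by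
      have h4 := Real.rpow_lt_rpow (by positivity) h3 (by positivity : (0:ℝ) < 1 / α)
      rwa [← Real.rpow_mul (abs_nonneg _), mul_one_div, div_self hα0.ne', Real.rpow_one] at h4
    have harg : |Complex.arg z| ≤ |z.im| / z.re := by
      have h5 : |Complex.arg z| < Real.pi / 2 :=
        Complex.abs_arg_lt_pi_div_two_iff.2 (Or.inl hx)
      have h6 := abs_le_abs_tan h5
      rw [Complex.tan_arg] at h6
      calc |Complex.arg z| ≤ |z.im / z.re| := h6
        _ = |z.im| / z.re := by rw [abs_div, abs_of_pos hx]
    have key : (z.re / C) ^ (1 / α) / z.re = z.re ^ (1 / α - 1) / C ^ (1 / α) := by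
      rw [Real.div_rpow hx.le hC.le, Real.rpow_sub hx, Real.rpow_one]
      field_simp
    calc |Complex.arg z| ≤ |z.im| / z.re := harg
      _ < (z.re / C) ^ (1 / α) / z.re := by gcongr
      _ = _ := key

private lemma cusp_im_pow_lt {C α : ℝ} (hC : 0 < C) (hα0 : 0 < α) (hα1 : α < 1) {z : ℂ}
    (hz : z ∈ planarCusp C α) :
    |(z ^ (-((1 / α - 1 : ℝ) : ℂ))).im| < (1 / α - 1) / C ^ (1 / α) := by
  have hβ : 0 < 1 / α - 1 := by
    rw [sub_pos, lt_div_iff₀ hα0, one_mul]; exact hα1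
  have hx : 0 < z.re := cusp_re_pos hC hz
  have hz0 : z ≠ 0 := fun h => by simp [h] at hx
  have habs : 0 < ‖z‖ := norm_pos_iff.mpr hz0
  have hden : (0:ℝ) < C ^ (1 / α) := Real.rpow_pos_of_pos hC _
  rw [Complex.cpow_def_of_ne_zero hz0, Complex.exp_im]
  have hre : (Complex.log z * (-((1 / α - 1 : ℝ) : ℂ))).re
      = Real.log (‖z‖) * (-(1 / α - 1)) := by
    simp [Complex.mul_re, Complex.log_re]
  have him : (Complex.log z * (-((1 / α - 1 : ℝ) : ℂ))).im
      = Complex.arg z * (-(1 / α - 1)) := by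
    simp [Complex.mul_im, Complex.log_im]
  rw [hre, him]
  have hexp : Real.exp (Real.log (‖z‖) * (-(1 / α - 1)))
      = ‖z‖ ^ (-(1 / α - 1)) := (Real.rpow_def_of_pos habs _).symm
  rw [hexp, abs_mul, abs_of_nonneg (Real.rpow_nonneg habs.le _)]
  have hsin : |Real.sin (Complex.arg z * (-(1 / α - 1)))| ≤ (1 / α - 1) * |Complex.arg z| := by
    calc |Real.sin (Complex.arg z * (-(1 / α - 1)))| ≤ |Complex.arg z * (-(1 / α - 1))| :=
          Real.abs_sin_le_abs
      _ = (1 / α - 1) * |Complex.arg z| := by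
          rw [abs_mul, abs_neg, abs_of_pos hβ]; ring
  have hbase : ‖z‖ ^ (-(1 / α - 1)) ≤ z.re ^ (-(1 / α - 1)) :=
    Real.rpow_le_rpow_of_nonpos hx (Complex.re_le_norm z) (neg_nonpos.2 hβ.le)
  have harg := cusp_arg_lt hC hα0 hz
  have hrepow : (0:ℝ) < z.re ^ (-(1 / α - 1)) := Real.rpow_pos_of_pos hx _
  calc ‖z‖ ^ (-(1 / α - 1)) * |Real.sin (Complex.arg z * (-(1 / α - 1)))|
      ≤ z.re ^ (-(1 / α - 1)) * ((1 / α - 1) * |Complex.arg z|) := by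
        apply mul_le_mul hbase hsin (abs_nonneg _) hrepow.le
    _ < z.re ^ (-(1 / α - 1)) * ((1 / α - 1) * (z.re ^ (1 / α - 1) / C ^ (1 / α))) := by
        gcongr
    _ = (1 / α - 1) / C ^ (1 / α) := by
        rw [Real.rpow_neg hx.le]
        have : z.re ^ (1 / α - 1) ≠ 0 := (Real.rpow_pos_of_pos hx _).ne'
        field_simp

/-- There exists `R > 0` (depending only on `C` and `α`) such that `F` is injective on
`Γ ∩ Δ_R`; hence `F` maps `Γ ∩ Δ_R` conformally onto a planar domain (the image is open). -/
theorem stmt5 (C α : ℝ) (hC : 0 < C) (hα0 : 0 < α) (hα1 : α < 1) :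
    ∃ R > 0, Set.InjOn (Fmap C α) (planarCusp C α ∩ Metric.ball 0 R) ∧
      IsOpen (Fmap C α '' (planarCusp C α ∩ Metric.ball 0 R)) := by
  have hβ : 0 < 1 / α - 1 := by
    rw [sub_pos, lt_div_iff₀ hα0, one_mul]; exact hα1
  have hCpow : (0:ℝ) < C ^ (1 / α) := Real.rpow_pos_of_pos hC _
  have hApos : 0 < Real.pi * C ^ (1 / α) / (2 * (1 / α - 1)) := by
    apply div_pos (mul_pos Real.pi_pos hCpow) (by linarith)
  set R : ℝ := (Real.pi * C ^ (1 / α) / (1 / α - 1)) ^ (1 / (1 / α - 1)) with hRdef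
  have hRpos : 0 < R :=
    Real.rpow_pos_of_pos (div_pos (mul_pos Real.pi_pos hCpow) hβ) _
  have hRpow : R ^ (1 / α - 1) = Real.pi * C ^ (1 / α) / (1 / α - 1) := by
    rw [hRdef, ← Real.rpow_mul (div_pos (mul_pos Real.pi_pos hCpow) hβ).le,
      one_div_mul_cancel hβ.ne', Real.rpow_one]
  -- key bound: β * |arg z| < π on the cusp ∩ ball
  have hargpi : ∀ z ∈ planarCusp C α ∩ Metric.ball 0 R,
      (1 / α - 1) * |Complex.arg z| < Real.pi := by
    rintro z ⟨hzc, hzb⟩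
    have hx : 0 < z.re := cusp_re_pos hC hzc
    have harg := cusp_arg_lt hC hα0 hzc
    have hzR : z.re < R := by
      have h1 : z.re ≤ ‖z‖ := Complex.re_le_norm z
      have h2 : ‖z‖ < R := by
        simpa [Complex.dist_eq] using hzb
      linarith
    have h3 : z.re ^ (1 / α - 1) < R ^ (1 / α - 1) :=
      Real.rpow_lt_rpow hx.le hzR hβ
    have h4 : |Complex.arg z| < R ^ (1 / α - 1) / C ^ (1 / α) := by
      calc |Complex.arg z| < z.re ^ (1 / α - 1) / C ^ (1 / α) := harg
        _ ≤ R ^ (1 / α - 1) / C ^ (1 / α) := by gcongr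
    rw [hRpow] at h4
    have h5 : R ^ (1/α-1) = R ^ (1/α-1) := rfl
    calc (1 / α - 1) * |Complex.arg z| < (1 / α - 1) * (Real.pi * C ^ (1 / α) / (1 / α - 1) / C ^ (1 / α)) := by
          rw [← hRpow] at h4 ⊢
          gcongr
      _ = Real.pi := by
          rw [div_div, mul_comm (1 / α - 1) (C ^ (1 / α)), ← div_div, mul_div_assoc,
            div_self hCpow.ne', mul_one, mul_comm, div_mul_cancel₀ _ hβ.ne']
  have hIm : ∀ z ∈ planarCusp C α,
      |((Real.pi * C ^ (1 / α) / (2 * (1 / α - 1))) * (z ^ (-((1 / α - 1 : ℝ) : ℂ))).im)|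
        < Real.pi / 2 := by
    intro z hzc
    have h1 := cusp_im_pow_lt hC hα0 hα1 hzc
    have h2 : Real.pi * C ^ (1 / α) / (2 * (1 / α - 1)) * ((1 / α - 1) / C ^ (1 / α))
        = Real.pi / 2 := by
      rw [div_mul_div_comm, div_eq_div_iff (by positivity) (by norm_num : (2:ℝ) ≠ 0)]
      ring
    calc |Real.pi * C ^ (1 / α) / (2 * (1 / α - 1)) * (z ^ (-((1 / α - 1 : ℝ) : ℂ))).im|
        = (Real.pi * C ^ (1 / α) / (2 * (1 / α - 1))) * |(z ^ (-((1 / α - 1 : ℝ) : ℂ))).im| := by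
          rw [abs_mul, abs_of_pos hApos]
      _ < (Real.pi * C ^ (1 / α) / (2 * (1 / α - 1))) * ((1 / α - 1) / C ^ (1 / α)) := by gcongr
      _ = Real.pi / 2 := h2
  have hinj : Set.InjOn (Fmap C α) (planarCusp C α ∩ Metric.ball 0 R) := by
    intro z1 hz1 z2 hz2 heq
    have hx1 : 0 < z1.re := cusp_re_pos hC hz1.1
    have hx2 : 0 < z2.re := cusp_re_pos hC hz2.1
    have hz10 : z1 ≠ 0 := fun h => by simp [h] at hx1
    have hz20 : z2 ≠ 0 := fun h => by simp [h] at hx2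
    unfold Fmap at heq
    rw [Complex.exp_eq_exp_iff_exists_int] at heq
    obtain ⟨n, hn⟩ := heq
    have emul : ∀ (r : ℝ) (w : ℂ), ((r : ℂ) * w).im = r * w.im := by
      intro r w; simp [Complex.mul_im]
    have eint : ∀ k : ℤ, ((k : ℂ) * (2 * (Real.pi : ℂ) * Complex.I)).im
        = (k : ℝ) * (2 * Real.pi) := by
      intro k; simp [Complex.mul_im]
    have hnim := congrArg Complex.im hn
    rw [Complex.add_im, neg_mul, neg_mul, Complex.neg_im, Complex.neg_im, emul, emul,
      eint] at hnim
    have hb1 := hIm z1 hz1.1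
    have hb2 := hIm z2 hz2.1
    have hn0 : n = 0 := by
      by_contra hne
      have h1 : (1:ℝ) ≤ |(n:ℝ)| := by
        rw [← Int.cast_abs]
        exact_mod_cast Int.one_le_abs hne
      have h2 : |(n:ℝ) * (2 * Real.pi)|
          = |Real.pi * C ^ (1 / α) / (2 * (1 / α - 1)) * (z2 ^ (-((1 / α - 1 : ℝ) : ℂ))).im
            - Real.pi * C ^ (1 / α) / (2 * (1 / α - 1)) * (z1 ^ (-((1 / α - 1 : ℝ) : ℂ))).im| := by
        rw [abs_eq_abs]; left; linarith [hnim]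
      have h3 : |(n:ℝ) * (2 * Real.pi)| < Real.pi := by
        rw [h2]
        calc _ ≤ _ := abs_sub _ _
          _ < Real.pi / 2 + Real.pi / 2 := by exact add_lt_add hb2 hb1
          _ = Real.pi := by ring
      rw [abs_mul, abs_of_pos (by positivity : (0:ℝ) < 2 * Real.pi)] at h3
      nlinarith [Real.pi_pos]
    rw [hn0] at hn
    simp only [Int.cast_zero, zero_mul, add_zero] at hn
    have hAne : (-((Real.pi * C ^ (1 / α) / (2 * (1 / α - 1)) : ℝ) : ℂ)) ≠ 0 :=
      neg_ne_zero.2 (Complex.ofReal_ne_zero.2 hApos.ne')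
    have hpow := mul_left_cancel₀ hAne hn
    rw [Complex.cpow_def_of_ne_zero hz10, Complex.cpow_def_of_ne_zero hz20,
      Complex.exp_eq_exp_iff_exists_int] at hpow
    obtain ⟨m, hm⟩ := hpow
    have emul2 : ∀ w : ℂ, (w * (-((1 / α - 1 : ℝ) : ℂ))).im = w.im * (-(1 / α - 1)) := by
      intro w; simp [Complex.mul_im]
    have hmim := congrArg Complex.im hm
    rw [Complex.add_im, emul2, emul2, eint, Complex.log_im, Complex.log_im] at hmim
    have ha1 := hargpi z1 hz1
    have ha2 := hargpi z2 hz2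
    have hm0 : m = 0 := by
      by_contra hne
      have h1 : (1:ℝ) ≤ |(m:ℝ)| := by
        rw [← Int.cast_abs]
        exact_mod_cast Int.one_le_abs hne
      have h2 : |(m:ℝ) * (2 * Real.pi)|
          = |z1.arg * (-(1 / α - 1)) - z2.arg * (-(1 / α - 1))| := by
        rw [abs_eq_abs]; left; linarith [hmim]
      have hb1' : |z1.arg * (-(1 / α - 1))| < Real.pi := by
        rw [abs_mul, abs_neg, abs_of_pos hβ, mul_comm]; exact ha1
      have hb2' : |z2.arg * (-(1 / α - 1))| < Real.pi := by
        rw [abs_mul, abs_neg, abs_of_pos hβ, mul_comm]; exact ha2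
      have h3 : |(m:ℝ) * (2 * Real.pi)| < 2 * Real.pi := by
        rw [h2]
        calc _ ≤ _ := abs_sub _ _
          _ < Real.pi + Real.pi := add_lt_add hb1' hb2'
          _ = 2 * Real.pi := by ring
      rw [abs_mul, abs_of_pos (by positivity : (0:ℝ) < 2 * Real.pi)] at h3
      nlinarith [Real.pi_pos]
    rw [hm0] at hm
    simp only [Int.cast_zero, zero_mul, add_zero] at hm
    have hcne : (-((1 / α - 1 : ℝ) : ℂ)) ≠ 0 :=
      neg_ne_zero.2 (Complex.ofReal_ne_zero.2 hβ.ne')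
    have hlog : Complex.log z1 = Complex.log z2 := mul_right_cancel₀ hcne hm
    rw [← Complex.exp_log hz10, ← Complex.exp_log hz20, hlog]
  refine ⟨R, hRpos, hinj, ?_⟩
  -- openness
  have hUopen : IsOpen (planarCusp C α ∩ Metric.ball 0 R) := by
    apply IsOpen.inter _ Metric.isOpen_ball
    have hcont : Continuous fun z : ℂ => C * |z.im| ^ α :=
      continuous_const.mul (Continuous.rpow_const
        (continuous_abs.comp Complex.continuous_im) (fun x => Or.inr hα0.le))
    exact isOpen_lt hcont Complex.continuous_re
  have hF : ∀ z ∈ planarCusp C α, AnalyticAt ℂ (Fmap C α) z := by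
    intro z hzc
    have hx : 0 < z.re := cusp_re_pos hC hzc
    have hopen : IsOpen {w : ℂ | 0 < w.re} := isOpen_lt continuous_const Complex.continuous_re
    have hdiff : DifferentiableOn ℂ (Fmap C α) {w : ℂ | 0 < w.re} := by
      intro w hw
      apply DifferentiableAt.differentiableWithinAt
      unfold Fmap
      apply DifferentiableAt.cexp
      apply DifferentiableAt.const_mul
      exact DifferentiableAt.cpow differentiableAt_id (differentiableAt_const _) (Or.inl hw)
    exact hdiff.analyticAt (hopen.mem_nhds hx)
  rw [isOpen_iff_mem_nhds]
  rintro y ⟨z, hz, rfl⟩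
  rcases (hF z hz.1).eventually_constant_or_nhds_le_map_nhds with hconst | hmap
  · exfalso
    have h1 : ∀ᶠ w in nhdsWithin z {z}ᶜ, Fmap C α w = Fmap C α z :=
      hconst.filter_mono nhdsWithin_le_nhds
    have h2 : ∀ᶠ w in nhdsWithin z {z}ᶜ, w ∈ planarCusp C α ∩ Metric.ball 0 R :=
      (hUopen.eventually_mem hz).filter_mono nhdsWithin_le_nhds
    obtain ⟨w, ⟨hfw, hwU⟩, hwne⟩ := ((h1.and h2).and self_mem_nhdsWithin).exists
    exact hwne (hinj hwU hz hfw)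
  · exact hmap (Filter.image_mem_map (hUopen.mem_nhds hz))
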